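/- With the CSA density-evolution setup below, suppose the expected channel load c > 0 satisfies 2·c·𝓑₂ < k (which holds for every c > 0 when 𝓑₂ = 0, i.e. when every component code has minimum distance at least 3). Then the collision-free fixed point 0 of the density-evolution recursion p_ℓ = (f_s ∘ f_b)(p_{ℓ-1}) is locally stable: there exists δ > 0 such that for every p₀ with |p₀| < δ, the iterates (f_s ∘ f_b)^[ℓ](p₀) converge to 0 as ℓ → ∞. (Stability condition for CSA: local stability holds when πα < k/(2𝓑₂).) -/

import Mathlib

open Finset

/-- The `g`-th un-normalized information function of a `k × n` matrix over GF(2). -/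
noncomputable def unnormInfoFun {k n : ℕ} (G : Matrix (Fin k) (Fin n) (ZMod 2)) (g : ℕ) : ℕ :=
  ∑ S ∈ Finset.powersetCard g (Finset.univ : Finset (Fin n)),
    (G.submatrix id (fun j : {x : Fin n // x ∈ S} => (j : Fin n))).rank

/-- The number of codewords of Hamming weight exactly `2` of the code generated by `G`. -/
noncomputable def numWeightTwo {k n : ℕ} (G : Matrix (Fin k) (Fin n) (ZMod 2)) : ℕ :=
  Set.ncard {c : Fin n → ZMod 2 | (∃ x : Fin k → ZMod 2, Matrix.vecMul x G = c) ∧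
    hammingNorm c = 2}

/-- The burst-node EXIT function of a CSA scheme with component generator matrices
`G h` (of size `k × n h`) drawn with probabilities `Λ h`. -/
noncomputable def burstExit {k θ : ℕ} (n : Fin θ → ℕ)
    (G : ∀ h : Fin θ, Matrix (Fin k) (Fin (n h)) (ZMod 2)) (Λ : Fin θ → ℝ) (p : ℝ) : ℝ :=
  (1 / ∑ h, Λ h * (n h : ℝ)) * ∑ h, Λ h *
    ∑ t ∈ Finset.range (n h),
      p ^ t * (1 - p) ^ (n h - 1 - t) *
        (((n h : ℝ) - t) * (unnormInfoFun (G h) (n h - t) : ℝ)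
          - ((t : ℝ) + 1) * (unnormInfoFun (G h) (n h - 1 - t) : ℝ))

/-- The slice-node EXIT function of CSA at expected channel load `c` and rate `R`. -/
noncomputable def sliceExit (c R q : ℝ) : ℝ := 1 - Real.exp (-(c / R) * q)

/-! ### Auxiliary linear-algebraic lemmas -/

section LinAlg

open Matrix

variable {k n : ℕ} (G : Matrix (Fin k) (Fin n) (ZMod 2))

/-- The kernel of the transpose of the column-submatrix of `G` indexed by `S`. -/
noncomputable def kerS (S : Finset (Fin n)) : Submodule (ZMod 2) (Fin k → ZMod 2) :=
  LinearMap.ker ((G.submatrix id (fun j : {x : Fin n // x ∈ S} => (j : Fin n)))ᵀ.mulVecLin)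

lemma mem_kerS_iff (S : Finset (Fin n)) (x : Fin k → ZMod 2) :
    x ∈ kerS G S ↔ ∀ j ∈ S, Matrix.vecMul x G j = 0 := by
  simp only [kerS, LinearMap.mem_ker, Matrix.mulVecLin_apply, Matrix.mulVec_transpose,
    funext_iff]
  constructor
  · intro h j hj
    have := h ⟨j, hj⟩
    simpa [Matrix.vecMul, dotProduct, Matrix.submatrix] using this
  · intro h j
    have := h j j.2
    simpa [Matrix.vecMul, dotProduct, Matrix.submatrix] using this

lemma rank_add_nullity (S : Finset (Fin n)) :
    (G.submatrix id (fun j : {x : Fin n // x ∈ S} => (j : Fin n))).rank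
      + Module.finrank (ZMod 2) (kerS G S) = k := by
  rw [← Matrix.rank_transpose, Matrix.rank, kerS,
    LinearMap.finrank_range_add_finrank_ker, Module.finrank_fintype_fun_eq_card,
    Fintype.card_fin]

lemma vecMul_inj (hrank : G.rank = k) {x : Fin k → ZMod 2}
    (hx : Matrix.vecMul x G = 0) : x = 0 := by
  have h := LinearMap.finrank_range_add_finrank_ker (Gᵀ.mulVecLin)
  rw [← Matrix.rank, Matrix.rank_transpose, hrank, Module.finrank_fintype_fun_eq_card,
    Fintype.card_fin] at h
  have hker : Module.finrank (ZMod 2) (LinearMap.ker Gᵀ.mulVecLin) = 0 := by omega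
  have hbot := Submodule.finrank_eq_zero.mp hker
  have hxk : x ∈ LinearMap.ker Gᵀ.mulVecLin := by
    rw [LinearMap.mem_ker, Matrix.mulVecLin_apply, Matrix.mulVec_transpose, hx]
  rw [hbot] at hxk
  simpa using hxk

lemma kerS_univ_eq_bot (hrank : G.rank = k) : kerS G (Finset.univ : Finset (Fin n)) = ⊥ := by
  ext x
  simp only [Submodule.mem_bot, mem_kerS_iff]
  constructor
  · intro h
    exact vecMul_inj G hrank (funext fun j => h j (Finset.mem_univ j))
  · rintro rfl j _
    rw [Matrix.zero_vecMul]; rfl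

lemma support_subset_compl {S : Finset (Fin n)} {x : Fin k → ZMod 2} (hx : x ∈ kerS G S) :
    ({j | Matrix.vecMul x G j ≠ 0} : Finset (Fin n)) ⊆ Sᶜ := by
  intro j hj
  simp only [Finset.mem_filter] at hj
  rw [Finset.mem_compl]
  intro hjS
  exact hj.2 ((mem_kerS_iff G S x).mp hx j hjS)

lemma kerS_eq_bot_of_card (hrank : G.rank = k)
    (hmd : ∀ x : Fin k → ZMod 2, hammingNorm (Matrix.vecMul x G) ≠ 1)
    {S : Finset (Fin n)} (hS : S.card = n - 1) (hn : 1 ≤ n) : kerS G S = ⊥ := by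
  rw [eq_bot_iff]
  intro x hx
  simp only [Submodule.mem_bot]
  by_contra hx0
  have hy : Matrix.vecMul x G ≠ 0 := fun h => hx0 (vecMul_inj G hrank h)
  have h1 : 1 ≤ hammingNorm (Matrix.vecMul x G) := hammingNorm_pos_iff.mpr hy
  have h2 : hammingNorm (Matrix.vecMul x G) ≤ Sᶜ.card :=
    Finset.card_le_card (support_subset_compl G hx)
  rw [Finset.card_compl, hS, Fintype.card_fin] at h2
  have : hammingNorm (Matrix.vecMul x G) = 1 := by omega
  exact hmd x this

/-- The indicator of the complement of `S`. -/
def indC (S : Finset (Fin n)) : Fin n → ZMod 2 := fun m => if m ∈ S then 0 else 1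

lemma zmod2_ne_zero {a : ZMod 2} (h : a ≠ 0) : a = 1 := by revert h; revert a; decide

lemma codeword_of_mem_kerS (hrank : G.rank = k)
    (hmd : ∀ x : Fin k → ZMod 2, hammingNorm (Matrix.vecMul x G) ≠ 1)
    {S : Finset (Fin n)} (hS : S.card = n - 2) (hn : 2 ≤ n)
    {x : Fin k → ZMod 2} (hx : x ∈ kerS G S) (hx0 : x ≠ 0) :
    Matrix.vecMul x G = indC S := by
  have hy : Matrix.vecMul x G ≠ 0 := fun h => hx0 (vecMul_inj G hrank h)
  have hsub := support_subset_compl G hx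
  have hcompl : Sᶜ.card = 2 := by
    rw [Finset.card_compl, hS, Fintype.card_fin]; omega
  have h1 : 1 ≤ hammingNorm (Matrix.vecMul x G) := hammingNorm_pos_iff.mpr hy
  have h2 : hammingNorm (Matrix.vecMul x G) ≤ 2 := by
    have := Finset.card_le_card hsub
    rw [hcompl] at this
    exact this
  have heq : hammingNorm (Matrix.vecMul x G) = 2 := by
    rcases Nat.lt_or_ge (hammingNorm (Matrix.vecMul x G)) 2 with h | h
    · exact absurd (by omega : hammingNorm (Matrix.vecMul x G) = 1) (hmd x)
    · omega
  have hsupp : ({j | Matrix.vecMul x G j ≠ 0} : Finset (Fin n)) = Sᶜ :=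
    Finset.eq_of_subset_of_card_le hsub (by rw [hcompl]; exact le_of_eq heq.symm)
  funext m
  by_cases hm : m ∈ S
  · have : m ∉ Sᶜ := by simp [hm]
    rw [← hsupp] at this
    simp only [Finset.mem_filter, Finset.mem_univ, true_and, not_not] at this
    simp [indC, hm, this]
  · have : m ∈ Sᶜ := by simp [hm]
    rw [← hsupp] at this
    simp only [Finset.mem_filter, Finset.mem_univ, true_and] at this
    simp [indC, hm, zmod2_ne_zero this]

lemma indC_ne_zero {S : Finset (Fin n)} (hS : S.card = n - 2) (hn : 2 ≤ n) :
    indC S ≠ 0 := by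
  have hcompl : Sᶜ.card = 2 := by
    rw [Finset.card_compl, hS, Fintype.card_fin]; omega
  obtain ⟨m, hm⟩ := Finset.card_pos.mp (by omega : 0 < Sᶜ.card)
  intro h
  have := congrFun h m
  rw [Finset.mem_compl] at hm
  simpa [indC, hm] using this

lemma finrank_kerS_card_sub_two (hrank : G.rank = k)
    (hmd : ∀ x : Fin k → ZMod 2, hammingNorm (Matrix.vecMul x G) ≠ 1)
    {S : Finset (Fin n)} (hS : S.card = n - 2) (hn : 2 ≤ n) :
    Module.finrank (ZMod 2) (kerS G S)
      = if ∃ x : Fin k → ZMod 2, Matrix.vecMul x G = indC S then 1 else 0 := by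
  by_cases h : ∃ x : Fin k → ZMod 2, Matrix.vecMul x G = indC S
  · rw [if_pos h]
    obtain ⟨x₀, hx₀⟩ := h
    have hx₀0 : x₀ ≠ 0 := by
      intro h0
      rw [h0, Matrix.zero_vecMul] at hx₀
      exact indC_ne_zero hS hn hx₀.symm
    have hker : kerS G S = Submodule.span (ZMod 2) {x₀} := by
      apply le_antisymm
      · intro x hx
        by_cases hx0 : x = 0
        · simp [hx0]
        · have hc := codeword_of_mem_kerS G hrank hmd hS hn hx hx0
          have hsub : Matrix.vecMul (x - x₀) G = 0 := by
            rw [Matrix.sub_vecMul, hc, hx₀, sub_self]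
          have hxe : x = x₀ := sub_eq_zero.mp (vecMul_inj G hrank hsub)
          rw [hxe]
          exact Submodule.mem_span_singleton_self x₀
      · rw [Submodule.span_le, Set.singleton_subset_iff]
        rw [SetLike.mem_coe, mem_kerS_iff]
        intro j hj
        rw [hx₀]
        simp [indC, hj]
    rw [hker]
    exact finrank_span_singleton hx₀0
  · rw [if_neg h]
    have hker : kerS G S = ⊥ := by
      rw [eq_bot_iff]
      intro x hx
      simp only [Submodule.mem_bot]
      by_contra hx0
      exact h ⟨x, codeword_of_mem_kerS G hrank hmd hS hn hx hx0⟩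
    rw [hker]
    exact finrank_bot _ _

lemma rank_of_kerS_bot {S : Finset (Fin n)} (h : kerS G S = ⊥) :
    (G.submatrix id (fun j : {x : Fin n // x ∈ S} => (j : Fin n))).rank = k := by
  have := rank_add_nullity G S
  rw [h] at this
  simpa using this

lemma unnormInfoFun_top (hrank : G.rank = k) : unnormInfoFun G n = k := by
  rw [unnormInfoFun]
  have hps : Finset.powersetCard n (Finset.univ : Finset (Fin n)) = {Finset.univ} := by
    have := Finset.powersetCard_self (Finset.univ : Finset (Fin n))
    rwa [Finset.card_univ, Fintype.card_fin] at this
  rw [hps, Finset.sum_singleton]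
  exact rank_of_kerS_bot G (kerS_univ_eq_bot G hrank)

lemma unnormInfoFun_sub_one (hrank : G.rank = k)
    (hmd : ∀ x : Fin k → ZMod 2, hammingNorm (Matrix.vecMul x G) ≠ 1) (hn : 1 ≤ n) :
    unnormInfoFun G (n - 1) = n * k := by
  rw [unnormInfoFun]
  have h1 : ∀ S ∈ Finset.powersetCard (n - 1) (Finset.univ : Finset (Fin n)),
      (G.submatrix id (fun j : {x : Fin n // x ∈ S} => (j : Fin n))).rank = k := by
    intro S hS
    rw [Finset.mem_powersetCard_univ] at hS
    exact rank_of_kerS_bot G (kerS_eq_bot_of_card G hrank hmd hS hn)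
  rw [Finset.sum_congr rfl h1, Finset.sum_const, smul_eq_mul,
    Finset.card_powersetCard, Finset.card_univ, Fintype.card_fin,
    ← Nat.choose_symm (Nat.sub_le n 1), Nat.sub_sub_self hn, Nat.choose_one_right]

lemma numWeightTwo_eq (hn : 2 ≤ n) :
    numWeightTwo G = ((Finset.powersetCard (n - 2) (Finset.univ : Finset (Fin n))).filter
      (fun S => ∃ x : Fin k → ZMod 2, Matrix.vecMul x G = indC S)).card := by
  classical
  rw [numWeightTwo]
  rw [show {c : Fin n → ZMod 2 | (∃ x : Fin k → ZMod 2, Matrix.vecMul x G = c) ∧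
      hammingNorm c = 2}
    = ↑((Finset.univ : Finset (Fin n → ZMod 2)).filter
        (fun c => (∃ x : Fin k → ZMod 2, Matrix.vecMul x G = c) ∧ hammingNorm c = 2)) by
    ext c; simp]
  rw [Set.ncard_coe_finset]
  apply Finset.card_bij' (fun c _ => ({j | c j ≠ 0} : Finset (Fin n))ᶜ)
    (fun S _ => indC S)
  · intro c hc
    simp only [Finset.mem_filter, Finset.mem_univ, true_and] at hc
    obtain ⟨⟨x, hx⟩, hw⟩ := hc
    have hcard : ({j | c j ≠ 0} : Finset (Fin n)).card = 2 := hw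
    have hind : indC (({j | c j ≠ 0} : Finset (Fin n))ᶜ) = c := by
      funext m
      by_cases hm : c m = 0
      · simp [indC, hm]
      · simp [indC, hm, zmod2_ne_zero hm]
    rw [Finset.mem_filter]
    constructor
    · rw [Finset.mem_powersetCard_univ, Finset.card_compl, hcard, Fintype.card_fin]
    · exact ⟨x, by rw [hx, hind]⟩
  · intro S hS
    rw [Finset.mem_filter] at hS
    obtain ⟨hS1, x, hx⟩ := hS
    rw [Finset.mem_powersetCard_univ] at hS1
    simp only [Finset.mem_filter, Finset.mem_univ, true_and]
    refine ⟨⟨x, hx⟩, ?_⟩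
    show ({j | indC S j ≠ 0} : Finset (Fin n)).card = 2
    have he : ({j | indC S j ≠ 0} : Finset (Fin n)) = Sᶜ := by
      ext m
      by_cases hm : m ∈ S <;> simp [indC, hm]
    rw [he, Finset.card_compl, hS1, Fintype.card_fin]
    omega
  · intro c hc
    simp only [Finset.mem_filter, Finset.mem_univ, true_and] at hc
    funext m
    by_cases hm : c m = 0
    · simp [indC, hm]
    · simp [indC, hm, zmod2_ne_zero hm]
  · intro S hS
    rw [Finset.mem_filter, Finset.mem_powersetCard_univ] at hS
    have he : ({j | indC S j ≠ 0} : Finset (Fin n)) = Sᶜ := by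
      ext m
      by_cases hm : m ∈ S <;> simp [indC, hm]
    rw [he, compl_compl]

lemma unnormInfoFun_sub_two (hrank : G.rank = k)
    (hmd : ∀ x : Fin k → ZMod 2, hammingNorm (Matrix.vecMul x G) ≠ 1) (hn : 2 ≤ n) :
    unnormInfoFun G (n - 2) + numWeightTwo G = n.choose 2 * k := by
  classical
  rw [numWeightTwo_eq G hn, unnormInfoFun, Finset.card_filter, ← Finset.sum_add_distrib]
  have h1 : ∀ S ∈ Finset.powersetCard (n - 2) (Finset.univ : Finset (Fin n)),
      (G.submatrix id (fun j : {x : Fin n // x ∈ S} => (j : Fin n))).rank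
        + (if ∃ x : Fin k → ZMod 2, Matrix.vecMul x G = indC S then 1 else 0) = k := by
    intro S hS
    rw [Finset.mem_powersetCard_univ] at hS
    rw [← finrank_kerS_card_sub_two G hrank hmd hS hn]
    exact rank_add_nullity G S
  rw [Finset.sum_congr rfl h1, Finset.sum_const, smul_eq_mul,
    Finset.card_powersetCard, Finset.card_univ, Fintype.card_fin,
    ← Nat.choose_symm (Nat.sub_le n 2), Nat.sub_sub_self hn]

end LinAlg

/-! ### Auxiliary analytic lemmas -/

lemma stable_of_deriv (f : ℝ → ℝ) (hf0 : f 0 = 0) {a : ℝ} (hd : HasDerivAt f a 0)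
    (ha : |a| < 1) :
    ∃ δ > 0, ∀ p₀ : ℝ, |p₀| < δ →
      Filter.Tendsto (fun ℓ : ℕ => f^[ℓ] p₀) Filter.atTop (nhds 0) := by
  set lam := (1 + |a|) / 2 with hlam
  have hlam1 : lam < 1 := by rw [hlam]; linarith
  have hlam0 : 0 ≤ lam := by positivity
  have hε : 0 < (1 - |a|) / 2 := by linarith
  have hlit := hasDerivAt_iff_isLittleO.mp hd
  have hev := hlit.def hε
  rw [Metric.eventually_nhds_iff] at hev
  obtain ⟨δ, hδ0, hδ⟩ := hev
  refine ⟨δ, hδ0, fun p₀ hp₀ => ?_⟩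
  have key : ∀ p : ℝ, |p| < δ → |f p| ≤ lam * |p| := by
    intro p hp
    have h := hδ (y := p) (by simpa [Real.dist_eq] using hp)
    simp only [hf0, sub_zero, smul_eq_mul, Real.norm_eq_abs] at h
    have h2 : |f p| ≤ |f p - p * a| + |p * a| := by
      have := abs_add_le (f p - p * a) (p * a)
      simpa using this
    rw [abs_mul] at h2
    calc |f p| ≤ |f p - p * a| + |p| * |a| := h2
      _ ≤ (1 - |a|) / 2 * |p| + |p| * |a| := by linarith
      _ = lam * |p| := by rw [hlam]; ring
  have bound : ∀ ℓ : ℕ, |f^[ℓ] p₀| ≤ lam ^ ℓ * |p₀| ∧ |f^[ℓ] p₀| < δ := by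
    intro ℓ
    induction ℓ with
    | zero => exact ⟨by simp, by simpa using hp₀⟩
    | succ m ih =>
      rw [Function.iterate_succ_apply']
      have h1 := key _ ih.2
      have hmono : lam * |f^[m] p₀| ≤ lam * (lam ^ m * |p₀|) :=
        mul_le_mul_of_nonneg_left ih.1 hlam0
      refine ⟨?_, ?_⟩
      · calc |f (f^[m] p₀)| ≤ lam * |f^[m] p₀| := h1
          _ ≤ lam * (lam ^ m * |p₀|) := hmono
          _ = lam ^ (m + 1) * |p₀| := by ring
      · have h3 : lam * |f^[m] p₀| ≤ 1 * |f^[m] p₀| :=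
          mul_le_mul_of_nonneg_right hlam1.le (abs_nonneg _)
        rw [one_mul] at h3
        exact lt_of_le_of_lt (h1.trans h3) ih.2
  apply squeeze_zero_norm (fun ℓ => (bound ℓ).1)
  have := (tendsto_pow_atTop_nhds_zero_of_lt_one hlam0 hlam1).mul_const |p₀|
  simpa using this

lemma monomial_deriv (t m : ℕ) (a : ℝ) :
    HasDerivAt (fun p : ℝ => p ^ t * (1 - p) ^ m * a)
      (((t : ℝ) * 0 ^ (t - 1) - 0 ^ t * m) * a) 0 := by
  have hp := hasDerivAt_pow t (0 : ℝ)
  have hm := ((hasDerivAt_id (0 : ℝ)).const_sub 1).pow m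
  have h := (hp.mul hm).mul_const a
  refine h.congr_deriv ?_
  simp only [id_eq, sub_zero, one_pow, Pi.pow_apply]
  ring

lemma slice_deriv (b : ℝ) : HasDerivAt (fun q : ℝ => 1 - Real.exp (-b * q)) b 0 := by
  have h := (((hasDerivAt_id (0 : ℝ)).const_mul (-b)).exp).const_sub 1
  refine h.congr_deriv ?_
  simp only [id_eq, mul_zero, Real.exp_zero, mul_one, neg_mul, neg_neg, one_mul]

/-- Stability condition for CSA: if the expected channel load `c > 0` satisfies
`2 c 𝓑₂ < k`, then the collision-free fixed point `0` of the density-evolution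
recursion `p_ℓ = (f_s ∘ f_b)(p_{ℓ-1})` is locally stable. -/
theorem csa_zero_fixed_point_locally_stable (k θ : ℕ) (hk : 1 ≤ k) (hθ : 1 ≤ θ)
    (n : Fin θ → ℕ) (hn : ∀ h, 2 ≤ n h)
    (G : ∀ h : Fin θ, Matrix (Fin k) (Fin (n h)) (ZMod 2))
    (hrank : ∀ h, (G h).rank = k)
    (hmd : ∀ h, ∀ x : Fin k → ZMod 2, hammingNorm (Matrix.vecMul x (G h)) ≠ 1)
    (Λ : Fin θ → ℝ) (hΛ : ∀ h, 0 ≤ Λ h) (hΛ1 : ∑ h, Λ h = 1)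
    (c : ℝ) (hc : 0 < c)
    (R : ℝ) (hR : R = (k : ℝ) / ∑ h, Λ h * (n h : ℝ))
    (hstab : 2 * c * (∑ h, Λ h * (numWeightTwo (G h) : ℝ)) < k) :
    ∃ δ > 0, ∀ p₀ : ℝ, |p₀| < δ →
      Filter.Tendsto (fun ℓ : ℕ => (sliceExit c R ∘ burstExit n G Λ)^[ℓ] p₀)
        Filter.atTop (nhds 0) := by
  -- abbreviations
  set nbar : ℝ := ∑ h, Λ h * (n h : ℝ) with hnbar
  have hnbar2 : (2 : ℝ) ≤ nbar := by
    rw [hnbar]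
    calc (2 : ℝ) = ∑ h, Λ h * 2 := by rw [← Finset.sum_mul, hΛ1, one_mul]
      _ ≤ ∑ h, Λ h * (n h : ℝ) := by
          apply Finset.sum_le_sum
          intro h _
          exact mul_le_mul_of_nonneg_left (by exact_mod_cast hn h) (hΛ h)
  have hnbar0 : (0 : ℝ) < nbar := by linarith
  have hk0 : (0 : ℝ) < (k : ℝ) := by exact_mod_cast hk
  -- the bracket terms
  set A : ∀ h : Fin θ, ℕ → ℝ := fun h t =>
    ((n h : ℝ) - t) * (unnormInfoFun (G h) (n h - t) : ℝ)
      - ((t : ℝ) + 1) * (unnormInfoFun (G h) (n h - 1 - t) : ℝ) with hA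
  have hE1 : ∀ h, (unnormInfoFun (G h) (n h) : ℝ) = k := fun h => by
    exact_mod_cast congrArg Nat.cast (unnormInfoFun_top (G h) (hrank h))
  have hE2 : ∀ h, (unnormInfoFun (G h) (n h - 1) : ℝ) = (n h : ℝ) * k := fun h => by
    have := unnormInfoFun_sub_one (G h) (hrank h) (hmd h) (le_trans one_le_two (hn h))
    exact_mod_cast congrArg Nat.cast this
  have hE3 : ∀ h, (unnormInfoFun (G h) (n h - 2) : ℝ)
      = ((n h).choose 2 : ℝ) * k - (numWeightTwo (G h) : ℝ) := fun h => by
    have := unnormInfoFun_sub_two (G h) (hrank h) (hmd h) (hn h)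
    have hcast : (unnormInfoFun (G h) (n h - 2) : ℝ) + (numWeightTwo (G h) : ℝ)
        = ((n h).choose 2 : ℝ) * k := by exact_mod_cast congrArg Nat.cast this
    linarith
  have hchoose : ∀ h, ((n h).choose 2 : ℝ) * 2 = (n h : ℝ) * ((n h : ℝ) - 1) := fun h => by
    have h2 : 2 ∣ n h * (n h - 1) := by
      rcases Nat.even_or_odd (n h) with he | ho
      · exact Dvd.dvd.mul_right he.two_dvd _
      · exact Dvd.dvd.mul_left (Nat.Odd.sub_odd ho odd_one).two_dvd _
    have : (n h).choose 2 * 2 = n h * (n h - 1) := by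
      rw [Nat.choose_two_right, Nat.div_mul_cancel h2]
    have hcast : ((n h).choose 2 : ℝ) * 2 = (n h : ℝ) * ((n h - 1 : ℕ) : ℝ) := by
      exact_mod_cast congrArg Nat.cast this
    rw [hcast, Nat.cast_sub (le_trans one_le_two (hn h)), Nat.cast_one]
  have hA0 : ∀ h, A h 0 = 0 := fun h => by
    rw [hA]
    simp only [Nat.cast_zero, sub_zero, Nat.sub_zero, zero_add, one_mul]
    rw [hE1 h, hE2 h]
    ring
  have hA1 : ∀ h, A h 1 = 2 * (numWeightTwo (G h) : ℝ) := fun h => by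
    rw [hA]
    simp only [Nat.cast_one]
    have e1 : n h - 1 - 1 = n h - 2 := by omega
    rw [e1, hE3 h]
    have e2 : (unnormInfoFun (G h) (n h - 1) : ℝ) = (n h : ℝ) * k := hE2 h
    rw [e2]
    have := hchoose h
    nlinarith [this]
  -- derivative of burstExit at 0
  have hbder : HasDerivAt (burstExit n G Λ)
      ((1 / nbar) * ∑ h, Λ h * ∑ t ∈ Finset.range (n h),
        ((t : ℝ) * 0 ^ (t - 1) - 0 ^ t * ((n h - 1 - t : ℕ) : ℝ)) * A h t) 0 := by
    have hin : ∀ h : Fin θ, HasDerivAt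
        (fun p : ℝ => ∑ t ∈ Finset.range (n h), p ^ t * (1 - p) ^ (n h - 1 - t) * A h t)
        (∑ t ∈ Finset.range (n h),
          ((t : ℝ) * 0 ^ (t - 1) - 0 ^ t * ((n h - 1 - t : ℕ) : ℝ)) * A h t) 0 :=
      fun h => HasDerivAt.fun_sum (fun t _ => monomial_deriv t (n h - 1 - t) (A h t))
    have hsum : HasDerivAt
        (fun p : ℝ => ∑ h, Λ h * ∑ t ∈ Finset.range (n h),
          p ^ t * (1 - p) ^ (n h - 1 - t) * A h t)
        (∑ h, Λ h * ∑ t ∈ Finset.range (n h),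
          ((t : ℝ) * 0 ^ (t - 1) - 0 ^ t * ((n h - 1 - t : ℕ) : ℝ)) * A h t) 0 :=
      HasDerivAt.fun_sum (fun h _ => (hin h).const_mul (Λ h))
    exact hsum.const_mul (1 / nbar)
  -- simplify the derivative value
  have hval : ∀ h : Fin θ, (∑ t ∈ Finset.range (n h),
      ((t : ℝ) * 0 ^ (t - 1) - 0 ^ t * ((n h - 1 - t : ℕ) : ℝ)) * A h t)
        = 2 * (numWeightTwo (G h) : ℝ) := by
    intro h
    rw [Finset.sum_eq_single_of_mem 1 (Finset.mem_range.mpr (hn h))]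
    · simp [hA1 h]
    · intro t _ ht
      rcases Nat.eq_zero_or_pos t with rfl | htpos
      · simp [hA0 h]
      · have ht2 : 2 ≤ t := by omega
        have e1 : (0 : ℝ) ^ (t - 1) = 0 := zero_pow (by omega)
        have e2 : (0 : ℝ) ^ t = 0 := zero_pow (by omega)
        rw [e1, e2]
        ring
  have hD : ((1 / nbar) * ∑ h, Λ h * ∑ t ∈ Finset.range (n h),
      ((t : ℝ) * 0 ^ (t - 1) - 0 ^ t * ((n h - 1 - t : ℕ) : ℝ)) * A h t)
        = (1 / nbar) * ∑ h, Λ h * (2 * (numWeightTwo (G h) : ℝ)) := by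
    congr 1
    exact Finset.sum_congr rfl (fun h _ => by rw [hval h])
  rw [hD] at hbder
  -- burstExit at 0 is 0
  have hb0 : burstExit n G Λ 0 = 0 := by
    rw [burstExit]
    rw [show (∑ h, Λ h * ∑ t ∈ Finset.range (n h),
        (0 : ℝ) ^ t * (1 - 0) ^ (n h - 1 - t) *
          (((n h : ℝ) - t) * (unnormInfoFun (G h) (n h - t) : ℝ)
            - ((t : ℝ) + 1) * (unnormInfoFun (G h) (n h - 1 - t) : ℝ))) = 0 from ?_]
    · ring
    · apply Finset.sum_eq_zero
      intro h _
      rw [show (∑ t ∈ Finset.range (n h),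
          (0 : ℝ) ^ t * (1 - 0) ^ (n h - 1 - t) *
            (((n h : ℝ) - t) * (unnormInfoFun (G h) (n h - t) : ℝ)
              - ((t : ℝ) + 1) * (unnormInfoFun (G h) (n h - 1 - t) : ℝ))) = 0 from ?_]
      · ring
      · rw [Finset.sum_eq_single_of_mem 0 (Finset.mem_range.mpr (lt_of_lt_of_le Nat.zero_lt_two (hn h)))]
        · have := hA0 h
          rw [hA] at this
          simp only [Nat.cast_zero, sub_zero, Nat.sub_zero, zero_add, one_mul] at this ⊢
          rw [pow_zero, one_pow]
          simpa using this
        · intro t _ ht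
          rw [zero_pow ht]
          ring
  -- derivative of the composition
  set D : ℝ := (1 / nbar) * ∑ h, Λ h * (2 * (numWeightTwo (G h) : ℝ)) with hDdef
  have hsder : HasDerivAt (sliceExit c R) (c / R) (burstExit n G Λ 0) := by
    rw [hb0]
    exact slice_deriv (c / R)
  have hcomp : HasDerivAt (sliceExit c R ∘ burstExit n G Λ) ((c / R) * D) 0 :=
    hsder.comp 0 hbder
  -- value of the composition at 0
  have hf0 : (sliceExit c R ∘ burstExit n G Λ) 0 = 0 := by
    simp [Function.comp, hb0, sliceExit]
  -- the derivative is 2 c 𝓑₂ / k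
  have hRval : R = (k : ℝ) / nbar := hR
  have hR0 : R ≠ 0 := by
    rw [hRval]
    positivity
  have hnbar0' : nbar ≠ 0 := ne_of_gt hnbar0
  have hk0' : (k : ℝ) ≠ 0 := ne_of_gt hk0
  have haval : (c / R) * D = 2 * c * (∑ h, Λ h * (numWeightTwo (G h) : ℝ)) / k := by
    have hsum2 : (∑ h, Λ h * (2 * (numWeightTwo (G h) : ℝ)))
        = 2 * ∑ h, Λ h * (numWeightTwo (G h) : ℝ) := by
      rw [Finset.mul_sum]; exact Finset.sum_congr rfl fun h _ => by ring
    rw [hDdef, hRval, hsum2]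
    field_simp
  have hB0 : 0 ≤ ∑ h, Λ h * (numWeightTwo (G h) : ℝ) :=
    Finset.sum_nonneg fun h _ => mul_nonneg (hΛ h) (Nat.cast_nonneg _)
  have habs : |(c / R) * D| < 1 := by
    rw [haval, abs_of_nonneg (by positivity)]
    rw [div_lt_one hk0]
    exact hstab
  exact stable_of_deriv _ hf0 hcomp habs
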